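/- Let 0 < c < A and define f : [0,1] → [0,1] by f(α) = 1 - ((A + c)/(A - c))·α for α ∈ [0, (A - c)/(2A)], and f(α) = ((A - c)/(A + c))·(1 - α) for α ∈ ((A - c)/(2A), 1]. Then the functional kl(f) = -∫₀¹ log|f'(x)| dx (where f' is the derivative of f, defined almost everywhere) satisfies kl(f) = (c/A) · log((A + c)/(A - c)). -/

import Mathlib

/-- The piecewise-linear trade-off function of the stochastic binary mechanism with scale `A`
and input bound `c`. -/
noncomputable def fBin (A c α : ℝ) : ℝ :=
  if α ≤ (A - c) / (2 * A) then 1 - ((A + c) / (A - c)) * α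
  else ((A - c) / (A + c)) * (1 - α)

/-! The two slopes of `fBin A c` are `-r` and `-r⁻¹` with `r = (A + c)/(A - c)`, so `log |fBin'|` is
`log r` left of the kink `m = (A - c)/(2A)` and `-log r` right of it. Hence the integral is
`(m - (1 - m)) log r`, and `1 - 2m = c/A`. -/

open Set MeasureTheory intervalIntegral

section PiecewiseConstant

variable {E : Type*} [NormedAddCommGroup E] {f : ℝ → E} {a b : ℝ} {u : E}

theorem intervalIntegrable_of_forall_Ioo (hab : a ≤ b) (h : ∀ x ∈ Ioo a b, f x = u) :
    IntervalIntegrable f volume a b := by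
  rw [intervalIntegrable_iff_integrableOn_Ioo_of_le hab]
  exact (integrableOn_const measure_Ioo_lt_top.ne).congr_fun (fun x hx ↦ (h x hx).symm)
    measurableSet_Ioo

variable [NormedSpace ℝ E] [CompleteSpace E]

theorem intervalIntegral_eq_of_forall_Ioo (hab : a ≤ b) (h : ∀ x ∈ Ioo a b, f x = u) :
    ∫ x in a..b, f x = (b - a) • u := by
  rw [integral_of_le hab, integral_Ioc_eq_integral_Ioo, setIntegral_congr_fun measurableSet_Ioo h,
    setIntegral_const, Real.volume_real_Ioo_of_le hab]

theorem intervalIntegral_eq_of_forall_Ioo_of_forall_Ioo {m : ℝ} {v : E} (ham : a ≤ m)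
    (hmb : m ≤ b) (hu : ∀ x ∈ Ioo a m, f x = u) (hv : ∀ x ∈ Ioo m b, f x = v) :
    ∫ x in a..b, f x = (m - a) • u + (b - m) • v := by
  rw [← integral_add_adjacent_intervals (intervalIntegrable_of_forall_Ioo ham hu)
    (intervalIntegrable_of_forall_Ioo hmb hv), intervalIntegral_eq_of_forall_Ioo ham hu,
    intervalIntegral_eq_of_forall_Ioo hmb hv]

end PiecewiseConstant

section fBin

variable {A c x : ℝ}

theorem deriv_fBin_of_lt (hx : x < (A - c) / (2 * A)) :
    deriv (fBin A c) x = -((A + c) / (A - c)) := by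
  have hloc : fBin A c =ᶠ[nhds x] fun α ↦ 1 - (A + c) / (A - c) * α := by
    filter_upwards [Iio_mem_nhds hx] with y hy using if_pos (le_of_lt hy)
  rw [hloc.deriv_eq]
  simp

theorem deriv_fBin_of_gt (hx : (A - c) / (2 * A) < x) :
    deriv (fBin A c) x = -((A - c) / (A + c)) := by
  have hloc : fBin A c =ᶠ[nhds x] fun α ↦ (A - c) / (A + c) * (1 - α) := by
    filter_upwards [Ioi_mem_nhds hx] with y hy using if_neg (not_le.mpr hy)
  rw [hloc.deriv_eq]
  simp

end fBin

/-- `kl(f) = -∫₀¹ log |f'(x)| dx = (c/A) · log ((A + c)/(A - c))` for the piecewise-linear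
trade-off function `f = fBin A c` of the stochastic binary mechanism. -/
theorem kl_fBin (A c : ℝ) (hc : 0 < c) (hcA : c < A) :
    -(∫ x in (0 : ℝ)..1, Real.log |deriv (fBin A c) x|) =
      (c / A) * Real.log ((A + c) / (A - c)) := by
  have hA : 0 < A := hc.trans hcA
  have hm0 : 0 ≤ (A - c) / (2 * A) := div_nonneg (by linarith) (by linarith)
  have hm1 : (A - c) / (2 * A) ≤ 1 := by rw [div_le_one (by positivity)]; linarith
  rw [intervalIntegral_eq_of_forall_Ioo_of_forall_Ioo hm0 hm1
    (fun x hx ↦ by rw [deriv_fBin_of_lt hx.2, abs_neg, Real.log_abs])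
    (fun x hx ↦ by rw [deriv_fBin_of_gt hx.1, abs_neg, Real.log_abs, ← inv_div, Real.log_inv])]
  have hkink : 1 - 2 * ((A - c) / (2 * A)) = c / A := by field_simp; ring
  rw [← hkink, smul_eq_mul, smul_eq_mul]
  ring
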